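/- arXiv:1807.06158 — 3 statements merged into one kernel-verified Lean document; each statement's English description precedes it below -/
import Mathlib

section
/- The function g: ℝ → ℝ∪{+∞} defined by g(x) = -x - log(1 - e^x) for x < 0 and g(x) = +∞ for x ≥ 0 is convex on ℝ. -/
/-!
On `(-∞, 0)` the function `-x - log (1 - eˣ)` has derivative `1 / (1 - eˣ) - 2`, which increases
with `x`, so it is convex there. Extending a real convex function on a convex set by `⊤` outside
the set keeps the convexity inequality: whenever a point with weight `t ∈ (0, 1)` lies outside, the
right-hand side is already `⊤`, since the extended function never takes the value `⊥`.
-/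

/-- The extended-real-valued function g(x) = -x - log(1 - e^x) for x < 0 and +∞ otherwise. -/
noncomputable def gGA : ℝ → EReal := fun x =>
  if x < 0 then ((-x - Real.log (1 - Real.exp x) : ℝ) : EReal) else ⊤

open Set Real

lemma hasDerivAt_neg_sub_log_one_sub_exp {x : ℝ} (hx : x < 0) :
    HasDerivAt (fun y => -y - log (1 - exp y)) (1 / (1 - exp x) - 2) x := by
  have hpos : 0 < 1 - exp x := sub_pos.2 (exp_lt_one_iff.2 hx)
  refine ((hasDerivAt_id x).neg.sub (((hasDerivAt_exp x).const_sub 1).log hpos.ne')).congr_deriv ?_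
  field_simp
  ring

lemma convexOn_neg_sub_log_one_sub_exp :
    ConvexOn ℝ (Iio 0) (fun x => -x - log (1 - exp x)) := by
  have hderiv : EqOn (fun x => 1 / (1 - exp x) - 2) (deriv fun y => -y - log (1 - exp y)) (Iio 0) :=
    fun x hx => (hasDerivAt_neg_sub_log_one_sub_exp hx).deriv.symm
  have hmono : MonotoneOn (fun x => 1 / (1 - exp x) - 2) (Iio 0) := fun x _ y hy hxy => by
    have : 0 < 1 - exp y := sub_pos.2 (exp_lt_one_iff.2 hy)
    dsimp only
    gcongr
  refine MonotoneOn.convexOn_of_deriv (convex_Iio 0)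
    (fun x hx => (hasDerivAt_neg_sub_log_one_sub_exp hx).continuousAt.continuousWithinAt)
    ?_ ?_
  · rw [interior_Iio]
    exact fun x hx =>
      (hasDerivAt_neg_sub_log_one_sub_exp hx).differentiableAt.differentiableWithinAt
  · rw [interior_Iio]
    exact hmono.congr hderiv

theorem ConvexOn.ereal_le_of_eq_top_outside {E : Type*} [AddCommGroup E] [Module ℝ E]
    {s : Set E} {f : E → ℝ} {g : E → EReal} (hf : ConvexOn ℝ s f)
    (hg_mem : ∀ x ∈ s, g x = f x) (hg_not_mem : ∀ x ∉ s, g x = ⊤) {x y : E} {t : ℝ}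
    (ht₀ : 0 ≤ t) (ht₁ : t ≤ 1) :
    g (t • x + (1 - t) • y) ≤ t * g x + ((1 - t : ℝ) : EReal) * g y := by
  have hmul_ne_bot (c : ℝ) (hc : 0 ≤ c) (z : E) : (c : EReal) * g z ≠ ⊥ := by
    by_cases hz : z ∈ s
    · simp [hg_mem z hz, ← EReal.coe_mul]
    · simp [hg_not_mem z hz, EReal.mul_ne_bot, hc]
  rcases ht₀.eq_or_lt with rfl | ht₀'
  · simp
  rcases ht₁.eq_or_lt with rfl | ht₁'
  · simp
  by_cases hx : x ∉ s
  · rw [hg_not_mem x hx, EReal.coe_mul_top_of_pos ht₀', EReal.top_add_of_ne_bot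
      (hmul_ne_bot _ (sub_nonneg.2 ht₁) y)]
    exact le_top
  by_cases hy : y ∉ s
  · rw [hg_not_mem y hy, EReal.coe_mul_top_of_pos (sub_pos.2 ht₁'),
      EReal.add_top_of_ne_bot (hmul_ne_bot _ ht₀ x)]
    exact le_top
  rw [not_not] at hx hy
  rw [hg_mem _ (hf.1 hx hy ht₀ (sub_nonneg.2 ht₁) (by ring)), hg_mem x hx, hg_mem y hy]
  exact_mod_cast hf.2 hx hy ht₀ (sub_nonneg.2 ht₁) (by ring)

theorem gGA_convex :
    ∀ x y t : ℝ, 0 ≤ t → t ≤ 1 →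
      gGA (t * x + (1 - t) * y) ≤ (t : EReal) * gGA x + ((1 - t : ℝ) : EReal) * gGA y := by
  intro x y t ht₀ ht₁
  simpa only [smul_eq_mul] using convexOn_neg_sub_log_one_sub_exp.ereal_le_of_eq_top_outside
    (g := gGA) (x := x) (y := y) (fun z hz => if_pos hz) (fun z hz => if_neg hz) ht₀ ht₁
end

section
/- Let X be a finite type, and let ρ, ρ_E : X → ℝ be nonnegative functions. Define ψ*(ρ - ρ_E) = sup over functions D: X → (0,1) of Σ_{x∈X} [ρ(x)·log(D(x)) + ρ_E(x)·log(1 - D(x))]. Then this supremum equals Σ_{x ∈ X, ρ(x)+ρ_E(x) > 0} [ρ(x)·log(ρ(x)/(ρ(x)+ρ_E(x))) + ρ_E(x)·log(ρ_E(x)/(ρ(x)+ρ_E(x)))], with the convention 0·log 0 = 0 and 0·log(0/t) = 0. -/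
/-!
Pointwise, `a log d + b log (1 - d)` is maximised over `d ∈ (0, 1)` at `d = a / (a + b)`
(Gibbs' inequality, via `log y ≤ y - 1`), with maximum `a log (a/(a+b)) + b log (b/(a+b))`.
When `a` or `b` vanishes this maximum is not attained, but it is the limit along the
smoothed discriminators `(a + t) / (a + b + 2t)`, `t → 0⁺`. Since the objective is a sum of
independent pointwise terms, its supremum is the sum of the pointwise suprema.
-/

open Real Set Filter Topology

theorem isLUB_sum_of_isLUB {ι α β : Type*} [Fintype ι] [AddCommMonoid α] [LinearOrder α]
    [IsOrderedAddMonoid α] [TopologicalSpace α] [OrderTopology α] [ContinuousAdd α]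
    {s : ι → Set β} {f : ι → β → α} {M : ι → α} (hs : ∀ i, (s i).Nonempty)
    (hM : ∀ i, IsLUB (f i '' s i) (M i)) :
    IsLUB {v | ∃ D : ι → β, (∀ i, D i ∈ s i) ∧ v = ∑ i, f i (D i)} (∑ i, M i) := by
  refine isLUB_of_mem_closure ?_ ?_
  · rintro _ ⟨D, hD, rfl⟩
    exact Finset.sum_le_sum fun i _ => (hM i).1 ⟨D i, hD i, rfl⟩
  · have hM_closure : M ∈ closure (univ.pi fun i => f i '' s i) := by
      rw [closure_pi_set]
      exact fun i _ => (hM i).mem_closure ((hs i).image _)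
    have hsum_closure := mem_closure_image
      (continuous_finsetSum Finset.univ fun i _ => continuous_apply i).continuousAt hM_closure
    refine closure_mono ?_ hsum_closure
    rintro _ ⟨y, hy, rfl⟩
    choose D hD hDy using fun i => hy i (mem_univ i)
    exact ⟨D, hD, by simp only [hDy]⟩

theorem mul_log_le_mul_log_div_add_sub {a s d : ℝ} (ha : 0 ≤ a) (hs : 0 < s) (hd : 0 < d) :
    a * log d ≤ a * log (a / s) + (d * s - a) := by
  rcases ha.eq_or_lt with rfl | ha
  · simpa using (mul_pos hd hs).le
  have hlog : log (d * s / a) = log d - log (a / s) := by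
    rw [log_div (by positivity) ha.ne', log_mul hd.ne' hs.ne', log_div ha.ne' hs.ne']
    ring
  calc a * log d = a * log (a / s) + a * log (d * s / a) := by rw [hlog]; ring
    _ ≤ a * log (a / s) + a * (d * s / a - 1) := by
      gcongr
      exact log_le_sub_one_of_pos (by positivity)
    _ = a * log (a / s) + (d * s - a) := by field_simp

theorem tendsto_mul_log_add_div_add_two_mul (a : ℝ) {s : ℝ} (hs : s ≠ 0) :
    Tendsto (fun t : ℝ => a * log ((a + t) / (s + 2 * t))) (𝓝 0) (𝓝 (a * log (a / s))) := by
  rcases eq_or_ne a 0 with rfl | ha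
  · simp
  have hcont : ContinuousAt (fun t : ℝ => a * log ((a + t) / (s + 2 * t))) 0 :=
    continuousAt_const.mul <|
      ((continuousAt_const.add continuousAt_id).div (by fun_prop) (by simpa using hs)).log
        (by simpa using div_ne_zero ha hs)
  simpa using hcont.tendsto

/-- The summand of `ψ*` at one transition: `a = ρ x`, `b = ρ_E x`, `d = D x`. -/
noncomputable def discriminatorObjective (a b d : ℝ) : ℝ :=
  a * log d + b * log (1 - d)

noncomputable def maxDiscriminatorObjective (a b : ℝ) : ℝ :=
  if 0 < a + b then a * log (a / (a + b)) + b * log (b / (a + b)) else 0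

noncomputable def smoothedDiscriminator (a b t : ℝ) : ℝ :=
  (a + t) / (a + b + 2 * t)

section Pointwise

variable {a b : ℝ}

theorem smoothedDiscriminator_mem_Ioo (ha : 0 ≤ a) (hb : 0 ≤ b) {t : ℝ} (ht : 0 < t) :
    smoothedDiscriminator a b t ∈ Ioo 0 1 := by
  have hden : 0 < a + b + 2 * t := by linarith
  unfold smoothedDiscriminator
  exact ⟨div_pos (by linarith) hden, (div_lt_one hden).2 (by linarith)⟩

theorem one_sub_smoothedDiscriminator {t : ℝ} (hden : a + b + 2 * t ≠ 0) :
    1 - smoothedDiscriminator a b t = (b + t) / (a + b + 2 * t) := by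
  rw [smoothedDiscriminator, sub_eq_iff_eq_add, ← add_div, eq_div_iff hden]
  ring

theorem discriminatorObjective_le (ha : 0 ≤ a) (hb : 0 ≤ b) (hab : 0 < a + b) {d : ℝ}
    (hd : d ∈ Ioo 0 1) :
    discriminatorObjective a b d ≤ a * log (a / (a + b)) + b * log (b / (a + b)) := by
  have h₁ := mul_log_le_mul_log_div_add_sub ha hab hd.1
  have h₂ := mul_log_le_mul_log_div_add_sub hb hab (sub_pos.2 hd.2)
  unfold discriminatorObjective
  linarith

theorem tendsto_discriminatorObjective_smoothedDiscriminator (hab : a + b ≠ 0) :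
    Tendsto (fun t => discriminatorObjective a b (smoothedDiscriminator a b t)) (𝓝 0)
      (𝓝 (a * log (a / (a + b)) + b * log (b / (a + b)))) := by
  have hlim := (tendsto_mul_log_add_div_add_two_mul a hab).add
    (tendsto_mul_log_add_div_add_two_mul b hab)
  have hden : ∀ᶠ t in 𝓝 (0 : ℝ), a + b + 2 * t ≠ 0 :=
    (by fun_prop : Continuous fun t : ℝ => a + b + 2 * t).continuousAt.eventually_ne
      (by simpa using hab)
  refine hlim.congr' ?_
  filter_upwards [hden] with t ht
  rw [discriminatorObjective, one_sub_smoothedDiscriminator ht]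
  rfl

theorem isLUB_discriminatorObjective (ha : 0 ≤ a) (hb : 0 ≤ b) :
    IsLUB (discriminatorObjective a b '' Ioo 0 1) (maxDiscriminatorObjective a b) := by
  unfold maxDiscriminatorObjective
  split_ifs with hab
  · refine isLUB_of_mem_closure ?_ ?_
    · rintro _ ⟨d, hd, rfl⟩
      exact discriminatorObjective_le ha hb hab hd
    · refine mem_closure_of_tendsto
        ((tendsto_discriminatorObjective_smoothedDiscriminator hab.ne').mono_left
          (nhdsWithin_le_nhds (s := Ioi 0))) ?_
      filter_upwards [self_mem_nhdsWithin] with t ht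
      exact mem_image_of_mem _ (smoothedDiscriminator_mem_Ioo ha hb ht)
  · obtain ⟨rfl, rfl⟩ : a = 0 ∧ b = 0 := ⟨by linarith, by linarith⟩
    have hzero : discriminatorObjective 0 0 = fun _ => 0 := by
      funext d
      simp [discriminatorObjective]
    rw [hzero, (nonempty_Ioo.2 zero_lt_one).image_const]
    exact isLUB_singleton

end Pointwise

open Finset in
theorem psiStar_eq_sum (X : Type*) [Fintype X] (ρ ρE : X → ℝ)
    (hρ : ∀ x, 0 ≤ ρ x) (hρE : ∀ x, 0 ≤ ρE x) :
    sSup {v : ℝ | ∃ D : X → ℝ, (∀ x, D x ∈ Set.Ioo (0 : ℝ) 1) ∧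
        v = ∑ x, (ρ x * Real.log (D x) + ρE x * Real.log (1 - D x))} =
      ∑ x, (if 0 < ρ x + ρE x then
          ρ x * Real.log (ρ x / (ρ x + ρE x)) +
          ρE x * Real.log (ρE x / (ρ x + ρE x))
        else 0) := by
  have hLUB := isLUB_sum_of_isLUB (s := fun _ => Ioo 0 1)
    (fun _ => nonempty_Ioo.2 zero_lt_one)
    (fun x => isLUB_discriminatorObjective (hρ x) (hρE x))
  exact hLUB.csSup_eq hLUB.nonempty
end

section
/- With the setup of the previous statement, the supremum ψ*(ρ - ρ_E) is always ≤ 0 when ρ and ρ_E are probability mass functions on X, it is ≥ -2·log 2, and it equals -2·log 2 if and only if ρ = ρ_E. -/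
/-!
Pointwise in `x`, the summand `a log d + b log (1 - d)` (with `a = ρ x`, `b = ρE x`) is at most `0`,
equals `-(a + b) log 2` at `d = 1/2`, and when `a = b` is at most `-2a log 2` since `d (1 - d) ≤ 1/4`.
Summing gives the two bounds and one direction of the equivalence. Conversely, if `a ≠ b`, moving
`d` from `1/2` halfway towards the optimal discriminator `a / (a + b)` strictly beats `1/2`, by the
Gibbs-type estimate `log y ≥ 1 - y⁻¹`; so the value `-2 log 2` is exceeded as soon as `ρ ≠ ρE`.
-/

open Real Set Finset

section Pointwise

variable {a b d : ℝ}

lemma mul_log_add_mul_log_one_sub_nonpos (ha : 0 ≤ a) (hb : 0 ≤ b) (hd : d ∈ Ioo (0 : ℝ) 1) :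
    a * log d + b * log (1 - d) ≤ 0 :=
  add_nonpos (mul_nonpos_of_nonneg_of_nonpos ha (log_nonpos hd.1.le hd.2.le))
    (mul_nonpos_of_nonneg_of_nonpos hb (log_nonpos (by linarith [hd.2]) (by linarith [hd.1])))

lemma mul_log_half_add_mul_log_one_sub_half (a b : ℝ) :
    a * log (1 / 2) + b * log (1 - 1 / 2) = -(a + b) * log 2 := by
  rw [show (1 : ℝ) - 1 / 2 = 1 / 2 by norm_num, one_div, log_inv]
  ring

lemma log_add_log_one_sub_le (hd : d ∈ Ioo (0 : ℝ) 1) :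
    log d + log (1 - d) ≤ -2 * log 2 := by
  obtain ⟨hd0, hd1⟩ := hd
  have h : log (2 ^ 2 * (d * (1 - d))) ≤ 0 :=
    log_nonpos (by nlinarith) (by nlinarith [sq_nonneg (2 * d - 1)])
  rw [log_mul (by positivity) (by nlinarith), log_mul hd0.ne' (by linarith), log_pow] at h
  push_cast at h
  linarith

lemma exists_mem_Ioo_neg_add_mul_log_two_lt (ha : 0 ≤ a) (hb : 0 ≤ b) (hab : a ≠ b) :
    ∃ d ∈ Ioo (0 : ℝ) 1, -(a + b) * log 2 < a * log d + b * log (1 - d) := by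
  have hs : 0 < a + b := lt_of_le_of_ne (add_nonneg ha hb) fun h => hab (by linarith)
  have h3ab : 0 < 3 * a + b := by linarith
  have ha3b : 0 < a + 3 * b := by linarith
  set d := (3 * a + b) / (4 * (a + b)) with hd
  have h2d : 2 * d = (3 * a + b) / (2 * (a + b)) := by rw [hd]; field_simp; ring
  have h2d' : 2 * (1 - d) = (a + 3 * b) / (2 * (a + b)) := by rw [hd]; field_simp; ring
  have hd0 : 0 < 2 * d := by rw [h2d]; positivity
  have hd1 : 0 < 2 * (1 - d) := by rw [h2d']; positivity
  have hgain : 0 < a * (1 - (2 * d)⁻¹) + b * (1 - (2 * (1 - d))⁻¹) := by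
    have hsq : 0 < (a - b) ^ 2 := sq_pos_iff.2 (sub_ne_zero.2 hab)
    rw [h2d, h2d', inv_div, inv_div,
      show a * (1 - 2 * (a + b) / (3 * a + b)) + b * (1 - 2 * (a + b) / (a + 3 * b))
        = (a + b) * (a - b) ^ 2 / ((3 * a + b) * (a + 3 * b)) by
        rw [one_sub_div h3ab.ne', one_sub_div ha3b.ne', mul_div_assoc', mul_div_assoc',
          div_add_div _ _ h3ab.ne' ha3b.ne']
        ring]
    positivity
  refine ⟨d, ⟨by linarith, by linarith⟩, ?_⟩
  have hlog : log (2 * d) = log 2 + log d := log_mul two_ne_zero (by linarith)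
  have hlog' : log (2 * (1 - d)) = log 2 + log (1 - d) := log_mul two_ne_zero (by linarith)
  nlinarith [mul_le_mul_of_nonneg_left (one_sub_inv_le_log_of_pos hd0) ha,
    mul_le_mul_of_nonneg_left (one_sub_inv_le_log_of_pos hd1) hb]

lemma exists_mem_Ioo_neg_add_mul_log_two_le (ha : 0 ≤ a) (hb : 0 ≤ b) :
    ∃ d ∈ Ioo (0 : ℝ) 1, -(a + b) * log 2 ≤ a * log d + b * log (1 - d) ∧
      (a ≠ b → -(a + b) * log 2 < a * log d + b * log (1 - d)) := by
  by_cases hab : a = b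
  · exact ⟨1 / 2, by norm_num, (mul_log_half_add_mul_log_one_sub_half a b).ge,
      fun h => absurd hab h⟩
  · obtain ⟨d, hd, hlt⟩ := exists_mem_Ioo_neg_add_mul_log_two_lt ha hb hab
    exact ⟨d, hd, hlt.le, fun _ => hlt⟩

end Pointwise

section Discriminator

variable {X : Type*} [Fintype X] {ρ ρE : X → ℝ}

def discriminatorValues (ρ ρE : X → ℝ) : Set ℝ :=
  {v | ∃ D : X → ℝ, (∀ x, D x ∈ Ioo (0 : ℝ) 1) ∧
    v = ∑ x, (ρ x * log (D x) + ρE x * log (1 - D x))}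

lemma sum_neg_add_mul_log_two (hρ1 : ∑ x, ρ x = 1) (hρE1 : ∑ x, ρE x = 1) :
    ∑ x, -(ρ x + ρE x) * log 2 = -2 * log 2 := by
  rw [← sum_mul, sum_neg_distrib, sum_add_distrib, hρ1, hρE1]
  ring

lemma discriminatorValues_nonpos (hρ : ∀ x, 0 ≤ ρ x) (hρE : ∀ x, 0 ≤ ρE x) :
    ∀ v ∈ discriminatorValues ρ ρE, v ≤ 0 := by
  rintro v ⟨D, hD, rfl⟩
  exact sum_nonpos fun x _ => mul_log_add_mul_log_one_sub_nonpos (hρ x) (hρE x) (hD x)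

lemma neg_two_mul_log_two_mem_discriminatorValues (hρ1 : ∑ x, ρ x = 1)
    (hρE1 : ∑ x, ρE x = 1) : -2 * log 2 ∈ discriminatorValues ρ ρE :=
  ⟨fun _ => 1 / 2, fun _ => by norm_num, by
    simp only [mul_log_half_add_mul_log_one_sub_half, sum_neg_add_mul_log_two hρ1 hρE1]⟩

lemma discriminatorValues_self_le {ρ : X → ℝ} (hρ : ∀ x, 0 ≤ ρ x) (hρ1 : ∑ x, ρ x = 1) :
    ∀ v ∈ discriminatorValues ρ ρ, v ≤ -2 * log 2 := by
  rintro v ⟨D, hD, rfl⟩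
  rw [← sum_neg_add_mul_log_two hρ1 hρ1]
  refine sum_le_sum fun x _ => ?_
  nlinarith [mul_le_mul_of_nonneg_left (log_add_log_one_sub_le (hD x)) (hρ x)]

lemma exists_mem_discriminatorValues_gt (hρ : ∀ x, 0 ≤ ρ x) (hρE : ∀ x, 0 ≤ ρE x)
    (hρ1 : ∑ x, ρ x = 1) (hρE1 : ∑ x, ρE x = 1) (hne : ρ ≠ ρE) :
    ∃ v ∈ discriminatorValues ρ ρE, -2 * log 2 < v := by
  obtain ⟨x₀, hx₀⟩ := Function.ne_iff.1 hne
  choose D hD hle hlt using fun x => exists_mem_Ioo_neg_add_mul_log_two_le (hρ x) (hρE x)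
  refine ⟨_, ⟨D, hD, rfl⟩, ?_⟩
  rw [← sum_neg_add_mul_log_two hρ1 hρE1]
  exact sum_lt_sum (fun x _ => hle x) ⟨x₀, mem_univ _, hlt x₀ hx₀⟩

end Discriminator

open Finset in
theorem psiStar_bounds (X : Type*) [Fintype X] (ρ ρE : X → ℝ)
    (hρ : ∀ x, 0 ≤ ρ x) (hρE : ∀ x, 0 ≤ ρE x)
    (hρ1 : ∑ x, ρ x = 1) (hρE1 : ∑ x, ρE x = 1) :
    sSup {v : ℝ | ∃ D : X → ℝ, (∀ x, D x ∈ Set.Ioo (0 : ℝ) 1) ∧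
        v = ∑ x, (ρ x * Real.log (D x) + ρE x * Real.log (1 - D x))} ≤ 0 ∧
    -2 * Real.log 2 ≤
      sSup {v : ℝ | ∃ D : X → ℝ, (∀ x, D x ∈ Set.Ioo (0 : ℝ) 1) ∧
        v = ∑ x, (ρ x * Real.log (D x) + ρE x * Real.log (1 - D x))} ∧
    (sSup {v : ℝ | ∃ D : X → ℝ, (∀ x, D x ∈ Set.Ioo (0 : ℝ) 1) ∧
        v = ∑ x, (ρ x * Real.log (D x) + ρE x * Real.log (1 - D x))} =
      -2 * Real.log 2 ↔ ρ = ρE) := by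
  change sSup (discriminatorValues ρ ρE) ≤ 0 ∧ -2 * log 2 ≤ sSup (discriminatorValues ρ ρE) ∧
    (sSup (discriminatorValues ρ ρE) = -2 * log 2 ↔ ρ = ρE)
  have hmem := neg_two_mul_log_two_mem_discriminatorValues hρ1 hρE1
  have hnonpos := discriminatorValues_nonpos hρ hρE
  have hbdd : BddAbove (discriminatorValues ρ ρE) := ⟨0, hnonpos⟩
  refine ⟨csSup_le ⟨_, hmem⟩ hnonpos, le_csSup hbdd hmem, fun hsup => ?_, ?_⟩
  · by_contra hne
    obtain ⟨v, hv, hlt⟩ := exists_mem_discriminatorValues_gt hρ hρE hρ1 hρE1 hne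
    exact (le_csSup hbdd hv).not_gt (hsup ▸ hlt)
  · rintro rfl
    exact le_antisymm (csSup_le ⟨_, hmem⟩ (discriminatorValues_self_le hρ hρ1))
      (le_csSup hbdd hmem)
end
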